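/- arXiv:2004.01974 — 3 statements merged into one kernel-verified Lean document; each statement's English description precedes it below -/
import Mathlib

section
/- If a continuously differentiable function S satisfies S'(t) = Λ - μS(t) - β(1-σ)S(t)I(t) + ξR(t) where Λ, μ, β, ξ ≥ 0, σ ≤ 1, and I(t), R(t) ≥ 0 for all t ≥ 0, and S(0) ≥ 0, then S(t) ≥ 0 for all t ≥ 0. -/
/-!
While `S < 0`, each term of `S' = Λ - μS - β(1-σ)SI + ξR` is nonnegative, so `S` cannot decrease
on a stretch where it is negative. If `S x < 0`, the last time `u ≤ x` with `S u ≥ 0` starts such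
a stretch, forcing `S x ≥ S u ≥ 0`.
-/

open Set

theorem nonneg_of_deriv_nonneg_where_neg {f : ℝ → ℝ} {a b : ℝ}
    (hf : ContinuousOn f (Icc a b)) (hdiff : DifferentiableOn ℝ f (Ioo a b))
    (hfa : 0 ≤ f a) (hderiv : ∀ x ∈ Ioo a b, f x < 0 → 0 ≤ deriv f x) :
    ∀ x ∈ Icc a b, 0 ≤ f x := by
  intro x hx
  by_contra! hfx
  -- `u` is the last time in `[a, x]` at which `f` is nonnegative.
  set K := Icc a x ∩ f ⁻¹' Ici 0
  have hsub : Icc a x ⊆ Icc a b := Icc_subset_Icc_right hx.2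
  have hK : IsCompact K := isCompact_Icc.of_isClosed_subset
    ((hf.mono hsub).preimage_isClosed_of_isClosed isClosed_Icc isClosed_Ici) inter_subset_left
  obtain ⟨u, ⟨⟨hau, hux⟩, hfu⟩, hu_max⟩ := hK.exists_isGreatest ⟨a, ⟨le_rfl, hx.1⟩, hfa⟩
  have hneg : ∀ y ∈ Ioo u x, f y < 0 := fun y hy ↦ by
    by_contra! hfy
    exact (hu_max ⟨⟨hau.trans hy.1.le, hy.2.le⟩, hfy⟩).not_gt hy.1
  have hIcc : Icc u x ⊆ Icc a b := (Icc_subset_Icc_left hau).trans hsub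
  have hIoo : Ioo u x ⊆ Ioo a b := Ioo_subset_Ioo hau hx.2
  have hmono : MonotoneOn f (Icc u x) := by
    refine monotoneOn_of_deriv_nonneg (convex_Icc u x) (hf.mono hIcc)
      (by simpa only [interior_Icc] using hdiff.mono hIoo) ?_
    rw [interior_Icc]
    exact fun y hy ↦ hderiv y (hIoo hy) (hneg y hy)
  exact hfx.not_ge (le_trans hfu (hmono ⟨le_rfl, hux⟩ ⟨hux, le_rfl⟩ hux))

/-- Positivity of the susceptible compartment `S` in the SEIRS model:
if `S` is continuously differentiable with
`S' t = Λ - μ S t - β (1-σ) S t * I t + ξ R t`, where `Λ, μ, β, ξ ≥ 0`,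
`σ ≤ 1`, `I t, R t ≥ 0` for `t ≥ 0`, and `S 0 ≥ 0`, then `S t ≥ 0` for all `t ≥ 0`. -/
theorem stmt_0 (S I R : ℝ → ℝ) (Λ μ β σ ξ : ℝ)
    (hS : ContDiff ℝ 1 S)
    (hΛ : 0 ≤ Λ) (hμ : 0 ≤ μ) (hβ : 0 ≤ β) (hσ : σ ≤ 1) (hξ : 0 ≤ ξ)
    (hI : ∀ t, 0 ≤ t → 0 ≤ I t) (hR : ∀ t, 0 ≤ t → 0 ≤ R t)
    (hode : ∀ t, 0 ≤ t →
      deriv S t = Λ - μ * S t - β * (1 - σ) * S t * I t + ξ * R t)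
    (hS0 : 0 ≤ S 0) :
    ∀ t, 0 ≤ t → 0 ≤ S t := by
  intro t ht
  refine nonneg_of_deriv_nonneg_where_neg hS.continuous.continuousOn
    (hS.differentiable one_ne_zero).differentiableOn hS0 ?_ t ⟨ht, le_rfl⟩
  intro s hs hSs
  have hs0 : 0 ≤ s := hs.1.le
  have hinfect : 0 ≤ β * (1 - σ) * I s := mul_nonneg (mul_nonneg hβ (by linarith)) (hI s hs0)
  rw [hode s hs0]
  nlinarith [mul_nonneg hμ (neg_nonneg.mpr hSs.le), mul_nonneg hinfect (neg_nonneg.mpr hSs.le),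
    mul_nonneg hξ (hR s hs0)]
end

section
/- Let a₂ = 2μ + γ + α + Δ and a₃ = (μ+γ+Δ)(μ+α) - αβΛ(1-σ)/μ with all parameters μ, γ, α, Δ, β, Λ positive and 0 ≤ σ < 1. Then both roots of λ² + a₂λ + a₃ = 0 have negative real part if and only if R₀ := αβΛ(1-σ)/(μ(μ+α)(μ+γ+Δ)) < 1. -/
lemma routh_hurwitz_quadratic (a2 a3 : ℝ) (h2 : 0 < a2) :
    (∀ z : ℂ, z ^ 2 + (a2 : ℝ) * z + (a3 : ℝ) = 0 → z.re < 0) ↔ 0 < a3 := by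
  constructor
  · intro h
    by_contra hle
    push_neg at hle
    set s := Real.sqrt (a2 ^ 2 - 4 * a3) with hs
    have hdisc : 0 ≤ a2 ^ 2 - 4 * a3 := by nlinarith
    have hs2 : s ^ 2 = a2 ^ 2 - 4 * a3 := Real.sq_sqrt hdisc
    have hsge : a2 ≤ s := by
      have : Real.sqrt (a2 ^ 2) ≤ s := Real.sqrt_le_sqrt (by nlinarith)
      rwa [Real.sqrt_sq h2.le] at this
    set r : ℝ := (-a2 + s) / 2 with hr
    have hroot : r ^ 2 + a2 * r + a3 = 0 := by
      have : r ^ 2 = ((-a2 + s) ^ 2) / 4 := by rw [hr]; ring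
      nlinarith
    have := h (r : ℂ) (by
      have : ((r ^ 2 + a2 * r + a3 : ℝ) : ℂ) = 0 := by rw [hroot]; norm_num
      push_cast at this
      convert this using 1)
    simp only [Complex.ofReal_re] at this
    have hr0 : 0 ≤ r := by rw [hr]; linarith
    linarith
  · intro h3 z hz
    have hre := congrArg Complex.re hz
    have him := congrArg Complex.im hz
    simp [Complex.add_re, Complex.add_im, Complex.mul_re, Complex.mul_im, pow_two,
      Complex.ofReal_re, Complex.ofReal_im] at hre him
    -- hre : x*x - y*y + a2*x + a3 = 0 (in some form), him : x*y + y*x + a2*y = 0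
    rcases eq_or_ne z.im 0 with hy | hy
    · by_contra hx
      push_neg at hx
      nlinarith
    · have h2x : z.re = -a2 / 2 := by
        have : z.im * (2 * z.re + a2) = 0 := by nlinarith
        rcases mul_eq_zero.mp this with h | h
        · exact absurd h hy
        · linarith
      rw [h2x]; linarith

/-- Routh–Hurwitz for the quadratic factor of the SEIRS characteristic polynomial at the
disease-free equilibrium: with `a₂ = 2μ + γ + α + Δ` and
`a₃ = (μ+γ+Δ)(μ+α) - αβΛ(1-σ)/μ`, all parameters positive and `0 ≤ σ < 1`,
both complex roots of `λ² + a₂ λ + a₃ = 0` have negative real part iff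
`R₀ = αβΛ(1-σ)/(μ(μ+α)(μ+γ+Δ)) < 1`. -/
theorem stmt_4 (μ γ α Δ β Λ σ : ℝ)
    (hμ : 0 < μ) (hγ : 0 < γ) (hα : 0 < α) (hΔ : 0 < Δ) (hβ : 0 < β) (hΛ : 0 < Λ)
    (hσ0 : 0 ≤ σ) (hσ1 : σ < 1) :
    (∀ z : ℂ,
        z ^ 2 + (2 * μ + γ + α + Δ : ℝ) * z
          + ((μ + γ + Δ) * (μ + α) - α * β * Λ * (1 - σ) / μ : ℝ) = 0 →
        z.re < 0) ↔
      α * β * Λ * (1 - σ) / (μ * (μ + α) * (μ + γ + Δ)) < 1 := by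
  rw [routh_hurwitz_quadratic _ _ (by linarith)]
  rw [div_lt_one (by positivity), sub_pos, div_lt_iff₀ hμ]
  constructor <;> intro h <;> nlinarith
end

section
/- With R₀ = αβΛ(1-σ)/(μ(μ+α)(μ+γ+Δ)), the eigenvalues of the Jacobian J_DFE at the disease-free equilibrium all have negative real part whenever all parameters μ, α, β, γ, Δ, Λ, ξ are positive, 0 ≤ σ < 1, and R₀ < 1. -/
/-!
The zero pattern of `J_DFE` makes its characteristic polynomial factor as `(λ + μ)(λ + μ + ξ)`
times the characteristic polynomial of the infection block `[[-(μ+α), k], [α, -(μ+γ+Δ)]]`,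
`k = βΛ(1-σ)/μ`. That block has negative trace, and `R₀ < 1` says exactly that its determinant
is positive, so by the Routh–Hurwitz criterion for quadratics its eigenvalues have negative real part.
-/

theorem Matrix.det_fin_four_of_block {R : Type*} [CommRing R] (a b₁₁ b₁₂ b₂₁ b₂₂ d p q r : R) :
    !![a, 0, p, q; 0, b₁₁, b₁₂, 0; 0, b₂₁, b₂₂, 0; 0, 0, r, d].det
      = a * d * (b₁₁ * b₂₂ - b₁₂ * b₂₁) := by
  simp [Matrix.det_succ_row_zero, Fin.sum_univ_succ]
  ring

theorem Complex.re_neg_of_quadratic_eq_zero {b c : ℝ} (hb : 0 < b) (hc : 0 < c) {z : ℂ}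
    (h : z ^ 2 + b * z + c = 0) : z.re < 0 := by
  have hre : z.re ^ 2 - z.im ^ 2 + b * z.re + c = 0 := by
    simpa [pow_two] using congrArg Complex.re h
  have him : z.im * (2 * z.re + b) = 0 := by
    have := congrArg Complex.im h
    simp only [pow_two, add_im, mul_im, ofReal_re, ofReal_im, zero_mul, add_zero, zero_im] at this
    linear_combination this
  rcases mul_eq_zero.mp him with hy | hx
  · rw [hy] at hre
    nlinarith
  · linarith

theorem stmt_6_general (μ α β γ Δ Λ ξ σ : ℝ)
    (hμ : 0 < μ) (hα : 0 < α) (hγ : 0 < γ) (hΔ : 0 < Δ)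
    (hξ : 0 < ξ)
    (hR0 : α * β * Λ * (1 - σ) / (μ * (μ + α) * (μ + γ + Δ)) < 1) :
    ∀ lam : ℂ,
      Matrix.det
        ((!![-μ, 0, -(β * Λ * (1 - σ) / μ), ξ;
             0, -(μ + α), β * Λ * (1 - σ) / μ, 0;
             0, α, -(μ + γ + Δ), 0;
             0, 0, γ, -(μ + ξ)] : Matrix (Fin 4) (Fin 4) ℝ).map
            (Complex.ofReal) - lam • (1 : Matrix (Fin 4) (Fin 4) ℂ)) = 0 →
      lam.re < 0 := by
  intro lam h
  set k := β * Λ * (1 - σ) / μ with hk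
  have hc : 0 < (μ + α) * (μ + γ + Δ) - α * k := by
    have hR0' := (div_lt_one (by positivity)).mp hR0
    have : (μ + α) * (μ + γ + Δ) - α * k
        = (μ * (μ + α) * (μ + γ + Δ) - α * β * Λ * (1 - σ)) / μ := by
      rw [hk]; field_simp
    rw [this]
    exact div_pos (by linarith) hμ
  have hblock : (!![-μ, 0, -k, ξ; 0, -(μ + α), k, 0; 0, α, -(μ + γ + Δ), 0;
      0, 0, γ, -(μ + ξ)] : Matrix (Fin 4) (Fin 4) ℝ).map Complex.ofReal - lam • 1
      = !![-μ - lam, 0, -k, ξ; 0, -(μ + α) - lam, k, 0; 0, α, -(μ + γ + Δ) - lam, 0;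
          0, 0, γ, -(μ + ξ) - lam] := by
    ext i j; fin_cases i <;> fin_cases j <;> simp
  rw [hblock, Matrix.det_fin_four_of_block] at h
  simp only [mul_eq_zero] at h
  rcases h with (h | h) | h
  · obtain rfl : lam = -μ := by linear_combination -h
    simpa using hμ
  · obtain rfl : lam = -(μ + ξ) := by linear_combination -h
    simp only [Complex.neg_re, Complex.add_re, Complex.ofReal_re]
    linarith
  · refine Complex.re_neg_of_quadratic_eq_zero (b := 2 * μ + γ + α + Δ) (by linarith) hc ?_
    push_cast
    linear_combination h

/-- If all parameters are positive, `0 ≤ σ < 1`, and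
`R₀ = αβΛ(1-σ)/(μ(μ+α)(μ+γ+Δ)) < 1`, then every eigenvalue of the Jacobian
`J_DFE` at the disease-free equilibrium has negative real part. -/
theorem stmt_6 (μ α β γ Δ Λ ξ σ : ℝ)
    (hμ : 0 < μ) (hα : 0 < α) (hβ : 0 < β) (hγ : 0 < γ) (hΔ : 0 < Δ)
    (hΛ : 0 < Λ) (hξ : 0 < ξ) (hσ0 : 0 ≤ σ) (hσ1 : σ < 1)
    (hR0 : α * β * Λ * (1 - σ) / (μ * (μ + α) * (μ + γ + Δ)) < 1) :
    ∀ lam : ℂ,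
      Matrix.det
        ((!![-μ, 0, -(β * Λ * (1 - σ) / μ), ξ;
             0, -(μ + α), β * Λ * (1 - σ) / μ, 0;
             0, α, -(μ + γ + Δ), 0;
             0, 0, γ, -(μ + ξ)] : Matrix (Fin 4) (Fin 4) ℝ).map
            (Complex.ofReal) - lam • (1 : Matrix (Fin 4) (Fin 4) ℂ)) = 0 →
      lam.re < 0 :=
  stmt_6_general μ α β γ Δ Λ ξ σ hμ hα hγ hΔ hξ hR0
end
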